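/- Let ν ∈ (−1/2,1) and set C_{ν1} = min{1−ν, 1+2ν} and C_{ν2} = max{1−ν, 1+2ν}. Then for every nonnegative measurable g : ℝ³ → ℝ with 0 < ρ < ∞, finite second moment ∫|v|²g(v)dv < ∞, and 0 < T < ∞, the temperature tensor 𝒯_ν is invertible with C_{ν2}^{−1}·T^{−1}·Id ⪯ 𝒯_ν^{−1} ⪯ C_{ν1}^{−1}·T^{−1}·Id in the positive semidefinite (Loewner) order, and C_{ν1}³T³ ≤ det 𝒯_ν ≤ C_{ν2}³T³. -/

import Mathlib

open MeasureTheory Real Matrix ENNReal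

noncomputable section

/-- Velocity/position space `ℝ³`. -/
abbrev E3 : Type := EuclideanSpace ℝ (Fin 3)

/-- The normalized global Maxwellian `μ(v) = (2π)^{-3/2} exp(-|v|²/2)`. -/
def Mw (v : E3) : ℝ := (2 * π) ^ (-(3 : ℝ) / 2) * Real.exp (-‖v‖ ^ 2 / 2)

/-- Density `ρ = ∫ g dv`. -/
def dens (g : E3 → ℝ) : ℝ := ∫ v, g v

/-- Bulk velocity `u = ρ⁻¹ ∫ v g dv`. -/
def bulk (g : E3 → ℝ) : E3 := (dens g)⁻¹ • ∫ v, g v • v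

/-- Temperature `T = (3ρ)⁻¹ ∫ |v-u|² g dv`. -/
def temp (g : E3 → ℝ) : ℝ := (3 * dens g)⁻¹ * ∫ v, ‖v - bulk g‖ ^ 2 * g v

/-- Stress tensor `Θ = ρ⁻¹ ∫ (v-u)⊗(v-u) g dv`. -/
def stress (g : E3 → ℝ) : Matrix (Fin 3) (Fin 3) ℝ :=
  Matrix.of fun i j => (dens g)⁻¹ * ∫ v, (v - bulk g) i * (v - bulk g) j * g v

/-- Temperature tensor `𝒯_ν = (1-ν) T Id + ν Θ`. -/
def tempTensor (g : E3 → ℝ) (ν : ℝ) : Matrix (Fin 3) (Fin 3) ℝ :=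
  ((1 - ν) * temp g) • (1 : Matrix (Fin 3) (Fin 3) ℝ) + ν • stress g

/-- Anisotropic Gaussian `M_ν = ρ det(2π𝒯_ν)^{-1/2} exp(-½ (v-u)ᵀ𝒯_ν⁻¹(v-u))`. -/
def aGauss (g : E3 → ℝ) (ν : ℝ) (v : E3) : ℝ :=
  dens g / Real.sqrt (((2 * π) • tempTensor g ν).det) *
    Real.exp (-(1 / 2) *
      ((fun i => (v - bulk g) i) ⬝ᵥ ((tempTensor g ν)⁻¹ *ᵥ fun i => (v - bulk g) i)))

/-- Collision frequency `A_ν = ρT/(1-ν)`. -/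
def collFreq (g : E3 → ℝ) (ν : ℝ) : ℝ := dens g * temp g / (1 - ν)

/-- Weighted sup-norm `‖w f‖_{L^∞} = sup_{x,v} (1+|v|)^β f(x,v)`. -/
def wSup (β : ℝ) (f : E3 → E3 → ℝ) : ℝ :=
  ⨆ p : E3 × E3, (1 + ‖p.2‖) ^ β * f p.1 p.2

/-- Finiteness of the weighted sup-norm. -/
def WBdd (β : ℝ) (f : E3 → E3 → ℝ) : Prop :=
  BddAbove (Set.range fun p : E3 × E3 => (1 + ‖p.2‖) ^ β * f p.1 p.2)

/-- A (global-in-time) mild solution of the ES-BGK equation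
`∂ₜF + v·∇ₓF = A_ν (M_ν - F)` with initial datum `F₀`. -/
structure IsMildSolution (ν β : ℝ) (F₀ : E3 → E3 → ℝ) (F : ℝ → E3 → E3 → ℝ) : Prop where
  nonneg : ∀ t, 0 ≤ t → ∀ x v, 0 ≤ F t x v
  meas : ∀ t, 0 ≤ t → Measurable fun p : E3 × E3 => F t p.1 p.2
  integrable : ∀ t, 0 ≤ t → ∀ x, Integrable (F t x)
  moment2 : ∀ t, 0 ≤ t → ∀ x, Integrable fun v => ‖v‖ ^ 2 * F t x v
  dens_pos : ∀ t, 0 ≤ t → ∀ x, 0 < dens (F t x)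
  temp_pos : ∀ t, 0 ≤ t → ∀ x, 0 < temp (F t x)
  wnorm_bdd : ∀ t, 0 ≤ t → WBdd β (F t)
  wnorm_cont : ContinuousOn (fun t => wSup β (F t)) (Set.Ici 0)
  mild : ∀ t, 0 ≤ t → ∀ x v,
    F t x v = F₀ (x - t • v) v *
        Real.exp (-(∫ τ in (0 : ℝ)..t, collFreq (F τ (x - (t - τ) • v)) ν))
      + ∫ s in (0 : ℝ)..t,
          Real.exp (-(∫ τ in s..t, collFreq (F τ (x - (t - τ) • v)) ν)) *
            collFreq (F s (x - (t - s) • v)) ν * aGauss (F s (x - (t - s) • v)) ν v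

/-- The entropy functional `ℰ(F₀)`. -/
def entE (F₀ : E3 → E3 → ℝ) : ℝ :=
  (∫ p : E3 × E3, (F₀ p.1 p.2 * Real.log (F₀ p.1 p.2) - Mw p.2 * Real.log (Mw p.2)))
    + (3 / 2 * Real.log (2 * π) - 1) * (∫ p : E3 × E3, (F₀ p.1 p.2 - Mw p.2))
    + 1 / 2 * ∫ p : E3 × E3, ‖p.2‖ ^ 2 * (F₀ p.1 p.2 - Mw p.2)

/-- Componentwise absolute value of `∫ (1, v, |v|², v⊗v) (f - μ) dv`. -/
def momentGap (f : E3 → ℝ) : ℝ :=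
  |∫ v, (f v - Mw v)| ⊔ (⨆ i : Fin 3, |∫ v, v i * (f v - Mw v)|) ⊔
    |∫ v, ‖v‖ ^ 2 * (f v - Mw v)| ⊔
    ⨆ ij : Fin 3 × Fin 3, |∫ v, v ij.1 * v ij.2 * (f v - Mw v)|

/-- `N_q(g) = sup_v (1+|v|)^q g(v)`, valued in `ℝ≥0∞`. -/
def Nq (q : ℝ) (g : E3 → ℝ) : ℝ≥0∞ :=
  ⨆ v : E3, ENNReal.ofReal ((1 + ‖v‖) ^ q * g v)

end

/-!
The stress tensor is a normalised second-moment matrix, so `0 ⪯ Θ`, and by Cauchy–Schwarz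
`xᵀΘx ≤ |x|² tr Θ = 3T|x|²`, i.e. `Θ ⪯ 3T·Id`. Hence, whatever the sign of `ν`, the tensor
`𝒯_ν = (1-ν)T·Id + νΘ` lies between `(1-ν)T·Id` and `(1+2ν)T·Id` in the Loewner order, so its
spectrum lies in `[C_{ν1}T, C_{ν2}T] ⊆ (0, ∞)`. Inverting, resp. multiplying, the eigenvalues
gives the bounds on `𝒯_ν⁻¹` and on `det 𝒯_ν`.
-/

open scoped MatrixOrder

namespace Matrix

variable {n : Type*} {A : Matrix n n ℝ} {a b : ℝ}

lemma le_of_dotProduct_mulVec_le [Fintype n] {B : Matrix n n ℝ} (hA : A.IsHermitian)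
    (hB : B.IsHermitian) (h : ∀ x, x ⬝ᵥ A *ᵥ x ≤ x ⬝ᵥ B *ᵥ x) : A ≤ B := by
  refine le_iff.mpr (posSemidef_iff_dotProduct_mulVec.mpr ⟨hB.sub hA, fun x => ?_⟩)
  simpa [sub_mulVec, star_trivial] using h x

lemma isHermitian_of_smul_one_le [DecidableEq n] (h : a • 1 ≤ A) : A.IsHermitian := by
  simpa using (le_iff.mp h).isHermitian.add (isHermitian_one.smul (IsSelfAdjoint.all a))

lemma isHermitian_of_le_smul_one [DecidableEq n] (h : A ≤ b • 1) : A.IsHermitian := by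
  simpa using (isHermitian_one.smul (IsSelfAdjoint.all b)).sub (le_iff.mp h).isHermitian

variable [Fintype n] [DecidableEq n]

lemma le_of_mem_spectrum_of_smul_one_le (h : a • 1 ≤ A) {x : ℝ} (hx : x ∈ spectrum ℝ A) :
    a ≤ x := by
  have hA := isHermitian_of_smul_one_le h
  rw [← Algebra.algebraMap_eq_smul_one, algebraMap_le_iff_le_spectrum hA] at h
  exact h x hx

lemma le_of_mem_spectrum_of_le_smul_one (h : A ≤ b • 1) {x : ℝ} (hx : x ∈ spectrum ℝ A) :
    x ≤ b := by
  have hA := isHermitian_of_le_smul_one h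
  rw [← Algebra.algebraMap_eq_smul_one, le_algebraMap_iff_spectrum_le hA] at h
  exact h x hx

lemma isUnit_of_smul_one_le (ha : 0 < a) (h : a • 1 ≤ A) : IsUnit A :=
  spectrum.isUnit_of_zero_notMem ℝ fun h0 =>
    (ha.trans_le (le_of_mem_spectrum_of_smul_one_le h h0)).ne rfl

lemma inv_eq_cfc_inv (ha : 0 < a) (h : a • 1 ≤ A) : A⁻¹ = cfc (·⁻¹ : ℝ → ℝ) A :=
  (nonsing_inv_eq_ringInverse A).trans <|
    (cfc_ringInverse_id (R := ℝ) A (isUnit_of_smul_one_le ha h)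
      (isHermitian_of_smul_one_le h)).symm

lemma continuousOn_inv_spectrum (ha : 0 < a) (h : a • 1 ≤ A) :
    ContinuousOn (·⁻¹ : ℝ → ℝ) (spectrum ℝ A) :=
  continuousOn_inv₀.mono fun _ hx =>
    (ha.trans_le (le_of_mem_spectrum_of_smul_one_le h hx)).ne'

lemma inv_le_inv_smul_one_of_smul_one_le (ha : 0 < a) (h : a • 1 ≤ A) : A⁻¹ ≤ a⁻¹ • 1 := by
  rw [inv_eq_cfc_inv ha h, ← Algebra.algebraMap_eq_smul_one]
  exact (cfc_le_algebraMap_iff _ _ _ (continuousOn_inv_spectrum ha h)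
    (isHermitian_of_smul_one_le h)).mpr
    fun x hx => inv_anti₀ ha (le_of_mem_spectrum_of_smul_one_le h hx)

lemma inv_smul_one_le_inv_of_le_smul_one (ha : 0 < a) (h₁ : a • 1 ≤ A) (h₂ : A ≤ b • 1) :
    b⁻¹ • 1 ≤ A⁻¹ := by
  rw [inv_eq_cfc_inv ha h₁, ← Algebra.algebraMap_eq_smul_one]
  exact (algebraMap_le_cfc_iff _ _ _ (continuousOn_inv_spectrum ha h₁)
    (isHermitian_of_smul_one_le h₁)).mpr
    fun x hx => inv_anti₀ (ha.trans_le (le_of_mem_spectrum_of_smul_one_le h₁ hx))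
      (le_of_mem_spectrum_of_le_smul_one h₂ hx)

lemma pow_card_le_det_of_smul_one_le (ha : 0 ≤ a) (h : a • 1 ≤ A) :
    a ^ Fintype.card n ≤ A.det := by
  have hA : A.IsHermitian := isHermitian_of_smul_one_le h
  calc a ^ Fintype.card n = ∏ _i : n, a := by rw [Finset.prod_const, Finset.card_univ]
    _ ≤ ∏ i, hA.eigenvalues i := Finset.prod_le_prod (fun _ _ => ha)
        fun i _ => le_of_mem_spectrum_of_smul_one_le h (hA.eigenvalues_mem_spectrum_real i)
    _ = A.det := by simp [hA.det_eq_prod_eigenvalues]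

lemma det_le_pow_card_of_le_smul_one (h₀ : 0 ≤ A) (h : A ≤ b • 1) :
    A.det ≤ b ^ Fintype.card n := by
  have hA : A.IsHermitian := isHermitian_of_le_smul_one h
  calc A.det = ∏ i, hA.eigenvalues i := by simp [hA.det_eq_prod_eigenvalues]
    _ ≤ ∏ _i : n, b := Finset.prod_le_prod (fun i _ => h₀.posSemidef.eigenvalues_nonneg i)
        fun i _ => le_of_mem_spectrum_of_le_smul_one h (hA.eigenvalues_mem_spectrum_real i)
    _ = b ^ Fintype.card n := by rw [Finset.prod_const, Finset.card_univ]

end Matrix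

section OrderedModule

variable {M : Type*} [AddCommGroup M] [PartialOrder M] [IsOrderedAddMonoid M] [Module ℝ M]
  [PosSMulMono ℝ M] {e Θ : M} {s : ℝ}

lemma min_smul_le_smul_add_smul (he : 0 ≤ e) (h₀ : 0 ≤ Θ) (hs : Θ ≤ s • e) (c ν : ℝ) :
    min c (c + ν * s) • e ≤ c • e + ν • Θ := by
  rcases le_total 0 ν with hν | hν
  · calc min c (c + ν * s) • e ≤ c • e := smul_le_smul_of_nonneg_right (min_le_left _ _) he
      _ ≤ c • e + ν • Θ := le_add_of_nonneg_right (smul_nonneg hν h₀)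
  · calc min c (c + ν * s) • e ≤ (c + ν * s) • e :=
          smul_le_smul_of_nonneg_right (min_le_right _ _) he
      _ = c • e + ν • (s • e) := by rw [add_smul, mul_smul]
      _ ≤ c • e + ν • Θ := add_le_add le_rfl (smul_le_smul_of_nonpos_left hs hν)

lemma smul_add_smul_le_max_smul (he : 0 ≤ e) (h₀ : 0 ≤ Θ) (hs : Θ ≤ s • e) (c ν : ℝ) :
    c • e + ν • Θ ≤ max c (c + ν * s) • e := by
  rcases le_total 0 ν with hν | hν
  · calc c • e + ν • Θ ≤ c • e + ν • (s • e) :=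
          add_le_add le_rfl (smul_le_smul_of_nonneg_left hs hν)
      _ = (c + ν * s) • e := by rw [add_smul, mul_smul]
      _ ≤ max c (c + ν * s) • e := smul_le_smul_of_nonneg_right (le_max_right _ _) he
  · calc c • e + ν • Θ ≤ c • e :=
          add_le_of_nonpos_right (smul_nonpos_of_nonpos_of_nonneg hν h₀)
      _ ≤ max c (c + ν * s) • e := smul_le_smul_of_nonneg_right (le_max_left _ _) he

end OrderedModule

lemma integrable_norm_sub_sq_mul {E : Type*} [NormedAddCommGroup E] [MeasurableSpace E]
    [OpensMeasurableSpace E] {μ : Measure E} {g : E → ℝ} (hg : Integrable g μ)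
    (hmom : Integrable (fun v => ‖v‖ ^ 2 * g v) μ) (u : E) :
    Integrable (fun v => ‖v - u‖ ^ 2 * g v) μ := by
  refine ((hmom.norm.const_mul 2).add (hg.norm.const_mul (2 * ‖u‖ ^ 2))).mono'
    (((continuous_id.sub continuous_const).norm.pow 2).aestronglyMeasurable.mul
      hg.aestronglyMeasurable) (ae_of_all _ fun v => ?_)
  have hsq : ‖v - u‖ ^ 2 ≤ 2 * ‖v‖ ^ 2 + 2 * ‖u‖ ^ 2 := by
    nlinarith [norm_sub_le v u, norm_nonneg (v - u), sq_nonneg (‖v‖ - ‖u‖)]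
  simp only [Pi.add_apply, norm_mul, norm_pow, norm_norm]
  nlinarith [mul_le_mul_of_nonneg_right hsq (norm_nonneg (g v))]

lemma integrable_apply_mul_apply_mul {ι : Type*} [Fintype ι] {μ : Measure (EuclideanSpace ℝ ι)}
    {g : EuclideanSpace ℝ ι → ℝ} {u : EuclideanSpace ℝ ι} (hg : AEStronglyMeasurable g μ)
    (h : Integrable (fun v => ‖v - u‖ ^ 2 * g v) μ) (i j : ι) :
    Integrable (fun v => (v - u) i * (v - u) j * g v) μ := by
  have hcont : ∀ k, Continuous fun v : EuclideanSpace ℝ ι => (v - u) k := fun k =>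
    (EuclideanSpace.proj k).continuous.comp (continuous_id.sub continuous_const)
  refine h.norm.mono' (((hcont i).mul (hcont j)).aestronglyMeasurable.mul hg)
    (ae_of_all _ fun v => ?_)
  rw [norm_mul, norm_mul, norm_mul, norm_pow, norm_norm, sq]
  gcongr <;> exact PiLp.norm_apply_le (v - u) _

section Moments

variable {g : E3 → ℝ}

lemma dens_nonneg (hnn : ∀ v, 0 ≤ g v) : 0 ≤ dens g :=
  integral_nonneg hnn

lemma three_mul_temp (g : E3 → ℝ) :
    3 * temp g = (dens g)⁻¹ * ∫ v, ‖v - bulk g‖ ^ 2 * g v := by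
  rw [temp, mul_inv, ← mul_assoc, ← mul_assoc, mul_inv_cancel₀ three_ne_zero, one_mul]

lemma temp_nonneg (hnn : ∀ v, 0 ≤ g v) : 0 ≤ temp g := by
  have : 0 ≤ 3 * temp g := by
    rw [three_mul_temp]
    exact mul_nonneg (inv_nonneg.mpr (dens_nonneg hnn))
      (integral_nonneg fun v => mul_nonneg (sq_nonneg _) (hnn v))
  linarith

lemma isHermitian_stress (g : E3 → ℝ) : (stress g).IsHermitian :=
  IsHermitian.ext fun i j => by
    simp only [stress, of_apply, star_trivial, mul_comm ((_ : E3) i) ((_ : E3) j)]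

lemma dotProduct_stress_mulVec (hg : Integrable g) (hmom : Integrable fun v => ‖v‖ ^ 2 * g v)
    (x : Fin 3 → ℝ) :
    x ⬝ᵥ stress g *ᵥ x = (dens g)⁻¹ * ∫ v, (∑ i, x i * (v - bulk g) i) ^ 2 * g v := by
  have hprod := integrable_apply_mul_apply_mul hg.aestronglyMeasurable
    (integrable_norm_sub_sq_mul hg hmom (bulk g))
  have hexpand : ∀ v : E3, (∑ i, x i * (v - bulk g) i) ^ 2 * g v
      = ∑ i, ∑ j, x i * x j * ((v - bulk g) i * (v - bulk g) j * g v) := fun v => by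
    rw [sq, Finset.sum_mul_sum]
    simp only [Finset.sum_mul]
    exact Finset.sum_congr rfl fun i _ => Finset.sum_congr rfl fun j _ => by ring
  simp only [hexpand]
  rw [integral_finsetSum _ fun i _ => integrable_finsetSum _ fun j _ => (hprod i j).const_mul _]
  simp only [integral_finsetSum _ fun j _ => (hprod _ j).const_mul _, integral_const_mul,
    dotProduct, mulVec, stress, of_apply, Finset.mul_sum]
  exact Finset.sum_congr rfl fun i _ => Finset.sum_congr rfl fun j _ => by ring

lemma stress_nonneg (hnn : ∀ v, 0 ≤ g v) (hg : Integrable g)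
    (hmom : Integrable fun v => ‖v‖ ^ 2 * g v) : 0 ≤ stress g := by
  refine le_of_dotProduct_mulVec_le isHermitian_zero (isHermitian_stress g) fun x => ?_
  rw [zero_mulVec, dotProduct_zero, dotProduct_stress_mulVec hg hmom]
  exact mul_nonneg (inv_nonneg.mpr (dens_nonneg hnn))
    (integral_nonneg fun v => mul_nonneg (sq_nonneg _) (hnn v))

lemma stress_le_smul_one (hnn : ∀ v, 0 ≤ g v) (hg : Integrable g)
    (hmom : Integrable fun v => ‖v‖ ^ 2 * g v) : stress g ≤ (3 * temp g) • 1 := by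
  refine le_of_dotProduct_mulVec_le (isHermitian_stress g)
    (isHermitian_one.smul (IsSelfAdjoint.all _)) fun x => ?_
  have hcs : ∀ v : E3, (∑ i, x i * (v - bulk g) i) ^ 2 * g v
      ≤ (x ⬝ᵥ x) * (‖v - bulk g‖ ^ 2 * g v) := fun v => by
    rw [← mul_assoc, dotProduct, EuclideanSpace.real_norm_sq_eq]
    refine mul_le_mul_of_nonneg_right ?_ (hnn v)
    simpa only [sq] using Finset.sum_mul_sq_le_sq_mul_sq Finset.univ x fun i => (v - bulk g) i
  have hmono := integral_mono_of_nonneg (ae_of_all _ fun v => mul_nonneg (sq_nonneg _) (hnn v))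
    ((integrable_norm_sub_sq_mul hg hmom (bulk g)).const_mul (x ⬝ᵥ x)) (ae_of_all _ hcs)
  rw [integral_const_mul] at hmono
  rw [dotProduct_stress_mulVec hg hmom, smul_mulVec, one_mulVec, dotProduct_smul, smul_eq_mul,
    three_mul_temp]
  calc (dens g)⁻¹ * ∫ v, (∑ i, x i * (v - bulk g) i) ^ 2 * g v
      ≤ (dens g)⁻¹ * ((x ⬝ᵥ x) * ∫ v, ‖v - bulk g‖ ^ 2 * g v) :=
        mul_le_mul_of_nonneg_left hmono (inv_nonneg.mpr (dens_nonneg hnn))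
    _ = _ := by ring

lemma smul_one_le_tempTensor (hnn : ∀ v, 0 ≤ g v) (hg : Integrable g)
    (hmom : Integrable fun v => ‖v‖ ^ 2 * g v) (ν : ℝ) :
    (min (1 - ν) (1 + 2 * ν) * temp g) • 1 ≤ tempTensor g ν := by
  have h := min_smul_le_smul_add_smul zero_le_one (stress_nonneg hnn hg hmom)
    (stress_le_smul_one hnn hg hmom) ((1 - ν) * temp g) ν
  rwa [min_mul_of_nonneg _ _ (temp_nonneg hnn),
    show (1 + 2 * ν) * temp g = (1 - ν) * temp g + ν * (3 * temp g) by ring]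

lemma tempTensor_le_smul_one (hnn : ∀ v, 0 ≤ g v) (hg : Integrable g)
    (hmom : Integrable fun v => ‖v‖ ^ 2 * g v) (ν : ℝ) :
    tempTensor g ν ≤ (max (1 - ν) (1 + 2 * ν) * temp g) • 1 := by
  have h := smul_add_smul_le_max_smul zero_le_one (stress_nonneg hnn hg hmom)
    (stress_le_smul_one hnn hg hmom) ((1 - ν) * temp g) ν
  rwa [max_mul_of_nonneg _ _ (temp_nonneg hnn),
    show (1 + 2 * ν) * temp g = (1 - ν) * temp g + ν * (3 * temp g) by ring]

end Moments

theorem tempTensor_inv_det_bounds_general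
    (ν : ℝ) (hν1 : -(1 / 2 : ℝ) < ν) (hν2 : ν < 1)
    (g : E3 → ℝ) (hnn : ∀ v, 0 ≤ g v)
    (hint : Integrable g)
    (hmom : Integrable fun v => ‖v‖ ^ 2 * g v) (htemp : 0 < temp g) :
    IsUnit (tempTensor g ν) ∧
    ((tempTensor g ν)⁻¹ -
      ((max (1 - ν) (1 + 2 * ν))⁻¹ * (temp g)⁻¹) • (1 : Matrix (Fin 3) (Fin 3) ℝ)).PosSemidef ∧
    (((min (1 - ν) (1 + 2 * ν))⁻¹ * (temp g)⁻¹) • (1 : Matrix (Fin 3) (Fin 3) ℝ) -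
      (tempTensor g ν)⁻¹).PosSemidef ∧
    (min (1 - ν) (1 + 2 * ν)) ^ 3 * temp g ^ 3 ≤ (tempTensor g ν).det ∧
    (tempTensor g ν).det ≤ (max (1 - ν) (1 + 2 * ν)) ^ 3 * temp g ^ 3 := by
  have hpos : 0 < min (1 - ν) (1 + 2 * ν) * temp g :=
    mul_pos (lt_min (by linarith) (by linarith)) htemp
  have hlo := smul_one_le_tempTensor hnn hint hmom ν
  have hhi := tempTensor_le_smul_one hnn hint hmom ν
  have hnonneg : 0 ≤ tempTensor g ν := (smul_nonneg hpos.le zero_le_one).trans hlo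
  refine ⟨isUnit_of_smul_one_le hpos hlo, ?_, ?_, ?_, ?_⟩
  · simpa only [mul_inv] using le_iff.mp (inv_smul_one_le_inv_of_le_smul_one hpos hlo hhi)
  · simpa only [mul_inv] using le_iff.mp (inv_le_inv_smul_one_of_smul_one_le hpos hlo)
  · simpa only [mul_pow, Fintype.card_fin] using pow_card_le_det_of_smul_one_le hpos.le hlo
  · simpa only [mul_pow, Fintype.card_fin] using det_le_pow_card_of_le_smul_one hnonneg hhi

/-- Corollary 2.3: Loewner bounds on `𝒯_ν⁻¹` and bounds on `det 𝒯_ν`. -/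
theorem tempTensor_inv_det_bounds
    (ν : ℝ) (hν1 : -(1 / 2 : ℝ) < ν) (hν2 : ν < 1)
    (g : E3 → ℝ) (hmeas : Measurable g) (hnn : ∀ v, 0 ≤ g v)
    (hint : Integrable g) (hdens : 0 < dens g)
    (hmom : Integrable fun v => ‖v‖ ^ 2 * g v) (htemp : 0 < temp g) :
    IsUnit (tempTensor g ν) ∧
    ((tempTensor g ν)⁻¹ -
      ((max (1 - ν) (1 + 2 * ν))⁻¹ * (temp g)⁻¹) • (1 : Matrix (Fin 3) (Fin 3) ℝ)).PosSemidef ∧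
    (((min (1 - ν) (1 + 2 * ν))⁻¹ * (temp g)⁻¹) • (1 : Matrix (Fin 3) (Fin 3) ℝ) -
      (tempTensor g ν)⁻¹).PosSemidef ∧
    (min (1 - ν) (1 + 2 * ν)) ^ 3 * temp g ^ 3 ≤ (tempTensor g ν).det ∧
    (tempTensor g ν).det ≤ (max (1 - ν) (1 + 2 * ν)) ^ 3 * temp g ^ 3 :=
  tempTensor_inv_det_bounds_general ν hν1 hν2 g hnn hint hmom htemp
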